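/- arXiv:2302.09913 — 4 statements merged into one kernel-verified Lean document; each statement's English description precedes it below -/
import Mathlib

section
/- Let F be a field, K ≥ 1, T ≥ 0, M ≥ 1 integers. For each of two users i and j, let w_{i,1},…,w_{i,K}, w_{j,1},…,w_{j,K} ∈ F^M be their local sub-vectors, z_{i,1},…,z_{i,T}, z_{j,1},…,z_{j,T} ∈ F^M their first-round masks and r_{i,1},…,r_{i,T}, r_{j,1},…,r_{j,T} ∈ F^M their second-round masks, and form the vector-valued polynomials F_n(x) = Σ_{k=1}^K w_{n,k} x^{k-1} + Σ_{t=1}^T z_{n,t} x^{K+t-1} and F̃_n(x) = Σ_{k=1}^K w_{n,k} x^{K-k} + Σ_{t=1}^T r_{n,t} x^{K+t-1} for n ∈ {i,j}. Define the scalar polynomial d_{i,j}(x) = Σ_{m=1}^M (F_i(x) − F_j(x))_m · (F̃_i(x) − F̃_j(x))_m ∈ F[x]. Then the coefficient of x^{K−1} in d_{i,j}(x) equals Σ_{k=1}^K ⟨w_{i,k} − w_{j,k}, w_{i,k} − w_{j,k}⟩, i.e., the sum over k of the squared distances between the k-th sub-vectors of the two users. -/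
open Polynomial Finset

lemma coeffA {F : Type*} [Field F] {K T : ℕ} (c : Fin K → F) (d : Fin T → F)
    (p : ℕ) (hp : p < K) :
    ((∑ k : Fin K, C (c k) * X ^ (k : ℕ)) +
      (∑ t : Fin T, C (d t) * X ^ (K + (t : ℕ)))).coeff p = c ⟨p, hp⟩ := by
  rw [coeff_add, finset_sum_coeff, finset_sum_coeff]
  simp only [coeff_C_mul, coeff_X_pow, mul_ite, mul_one, mul_zero]
  rw [Finset.sum_eq_single (⟨p, hp⟩ : Fin K)]
  · have h : (∑ t : Fin T, if p = K + (t : ℕ) then d t else 0) = 0 :=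
      Finset.sum_eq_zero (fun t _ => if_neg (by omega))
    rw [h, if_pos rfl, add_zero]
  · intro k _ hk
    exact if_neg (fun hpk => hk (Fin.ext hpk.symm))
  · simp

lemma coeffB {F : Type*} [Field F] {K T : ℕ} (c : Fin K → F) (d : Fin T → F)
    (q : ℕ) (hq : q < K) :
    ((∑ k : Fin K, C (c k) * X ^ (K - 1 - (k : ℕ))) +
      (∑ t : Fin T, C (d t) * X ^ (K + (t : ℕ)))).coeff q = c ⟨K - 1 - q, by omega⟩ := by
  rw [coeff_add, finset_sum_coeff, finset_sum_coeff]
  simp only [coeff_C_mul, coeff_X_pow, mul_ite, mul_one, mul_zero]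
  rw [Finset.sum_eq_single (⟨K - 1 - q, by omega⟩ : Fin K)]
  · have h : (∑ t : Fin T, if q = K + (t : ℕ) then d t else 0) = 0 :=
      Finset.sum_eq_zero (fun t _ => if_neg (by omega))
    rw [h, if_pos (show q = K - 1 - (K - 1 - q) by omega), add_zero]
  · intro k _ hk
    have hk' : (k : ℕ) < K := k.isLt
    refine if_neg (fun hq2 => hk (Fin.ext ?_))
    show (k : ℕ) = K - 1 - q
    omega
  · simp


/-- the coefficient of `x^(K-1)` in the pairwise "distance polynomial"
`d_{i,j}(x) = Σ_m (F_i(x) − F_j(x))_m · (F̃_i(x) − F̃_j(x))_m` equals the sum over the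
`K` partitions of the squared distances of the corresponding sub-vectors.
Here `F_n(x) = Σ_{k=1}^K w_{n,k} x^{k-1} + Σ_{t=1}^T z_{n,t} x^{K+t-1}` and
`F̃_n(x) = Σ_{k=1}^K w_{n,k} x^{K-k} + Σ_{t=1}^T r_{n,t} x^{K+t-1}`, written coordinatewise
(indices `k ∈ Fin K` correspond to `k+1 ∈ [K]`, `t ∈ Fin T` to `t+1 ∈ [T]`). -/
theorem stmt_0 {F : Type*} [Field F] (K T M : ℕ) (hK : 1 ≤ K) (hM : 1 ≤ M)
    (wi wj : Fin K → Fin M → F) (zi zj ri rj : Fin T → Fin M → F) :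
    (∑ m : Fin M,
      (((∑ k : Fin K, Polynomial.C (wi k m) * Polynomial.X ^ (k : ℕ)) +
          (∑ t : Fin T, Polynomial.C (zi t m) * Polynomial.X ^ (K + (t : ℕ)))) -
        ((∑ k : Fin K, Polynomial.C (wj k m) * Polynomial.X ^ (k : ℕ)) +
          (∑ t : Fin T, Polynomial.C (zj t m) * Polynomial.X ^ (K + (t : ℕ))))) *
      (((∑ k : Fin K, Polynomial.C (wi k m) * Polynomial.X ^ (K - 1 - (k : ℕ))) +
          (∑ t : Fin T, Polynomial.C (ri t m) * Polynomial.X ^ (K + (t : ℕ)))) -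
        ((∑ k : Fin K, Polynomial.C (wj k m) * Polynomial.X ^ (K - 1 - (k : ℕ))) +
          (∑ t : Fin T, Polynomial.C (rj t m) * Polynomial.X ^ (K + (t : ℕ)))))).coeff (K - 1)
    = ∑ k : Fin K, ∑ m : Fin M, (wi k m - wj k m) * (wi k m - wj k m) := by
  rw [finset_sum_coeff, Finset.sum_comm]
  apply Finset.sum_congr rfl
  intro m _
  rw [coeff_mul, Finset.Nat.sum_antidiagonal_eq_sum_range_succ_mk]
  dsimp only
  have hKK : (K - 1).succ = K := by omega
  rw [hKK, ← Fin.sum_univ_eq_sum_range]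
  apply Finset.sum_congr rfl
  intro k _
  have hk : (k : ℕ) < K := k.isLt
  rw [coeff_sub, coeff_sub, coeffA _ _ _ hk, coeffA _ _ _ hk,
      coeffB _ _ (K - 1 - (k : ℕ)) (by omega), coeffB _ _ (K - 1 - (k : ℕ)) (by omega)]
  have he : (⟨(k : ℕ), hk⟩ : Fin K) = k := rfl
  have he2 : (⟨K - 1 - (K - 1 - (k : ℕ)), by omega⟩ : Fin K) = k := by
    simp only [Fin.ext_iff]; omega
  rw [he, he2]
end

section
/- (Privacy of first-round ramp sharing against T colluders.) Let F be a field, K ≥ 1, T ≥ 1, M ≥ 1 integers, and let α_1, …, α_T ∈ F be pairwise distinct and nonzero. Fix sub-vectors w_1, …, w_K ∈ F^M. Then the map Θ_w : (F^M)^T → (F^M)^T sending a tuple of masks (z_1, …, z_T) to the tuple of shares ( Σ_{k=1}^K w_k α_i^{k-1} + Σ_{t=1}^T z_t α_i^{K+t-1} )_{i=1}^T is a bijection. -/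
/-- privacy of first-round ramp sharing against `T` colluders. For any fixed
secret sub-vectors `w₁,…,w_K ∈ F^M` and pairwise-distinct nonzero points `α₁,…,α_T`, the
map from the masks `(z₁,…,z_T)` to the `T` shares
`(Σ_{k=1}^K w_k α_i^{k-1} + Σ_{t=1}^T z_t α_i^{K+t-1})_{i=1}^T` is a bijection.
(Indices `k ∈ Fin K` correspond to `k+1 ∈ [K]`, `t ∈ Fin T` to `t+1 ∈ [T]`.) -/
theorem stmt_6 {F : Type*} [Field F] (K T M : ℕ) (hK : 1 ≤ K) (hT : 1 ≤ T) (hM : 1 ≤ M)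
    (α : Fin T → F) (hα : Function.Injective α) (hα0 : ∀ i, α i ≠ 0)
    (w : Fin K → Fin M → F) :
    Function.Bijective (fun z : Fin T → Fin M → F =>
      fun (i : Fin T) (m : Fin M) =>
        (∑ k : Fin K, w k m * α i ^ (k : ℕ)) +
          (∑ t : Fin T, z t m * α i ^ (K + (t : ℕ)))) := by
  classical
  set B : Matrix (Fin T) (Fin T) F := Matrix.of fun i t => α i ^ (K + (t : ℕ)) with hB
  have hBfac : B = Matrix.diagonal (fun i => α i ^ K) * Matrix.vandermonde α := by
    ext i t
    simp [hB, Matrix.diagonal_mul, Matrix.vandermonde, pow_add]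
  have hBdet : IsUnit B.det := by
    rw [hBfac, Matrix.det_mul, Matrix.det_diagonal, Matrix.det_vandermonde,
      isUnit_iff_ne_zero]
    refine mul_ne_zero ?_ ?_
    · exact Finset.prod_ne_zero_iff.2 fun i _ => pow_ne_zero _ (hα0 i)
    · refine Finset.prod_ne_zero_iff.2 fun i _ => Finset.prod_ne_zero_iff.2 fun j hj => ?_
      exact sub_ne_zero.2 fun h => absurd (hα h) (Finset.mem_Ioi.1 hj).ne'
  set c : Fin T → Fin M → F := fun i m => ∑ k : Fin K, w k m * α i ^ (k : ℕ) with hc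
  have key : ∀ (z : Fin T → Fin M → F) (i : Fin T) (m : Fin M),
      (∑ t : Fin T, z t m * α i ^ (K + (t : ℕ))) = B.mulVec (fun t => z t m) i := by
    intro z i m
    simp [Matrix.mulVec, dotProduct, hB, mul_comm]
  rw [Function.bijective_iff_has_inverse]
  refine ⟨fun s t m => (B⁻¹).mulVec (fun i => s i m - c i m) t, ?_, ?_⟩
  · intro z
    funext t m
    simp only [key, hc]
    have : (fun i => c i m + B.mulVec (fun t => z t m) i - c i m)
        = B.mulVec (fun t => z t m) := by
      funext i; ring
    simp only [hc] at this
    rw [this, Matrix.mulVec_mulVec, Matrix.nonsing_inv_mul B hBdet, Matrix.one_mulVec]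
  · intro s
    funext i m
    dsimp only
    rw [key (fun t m => (B⁻¹).mulVec (fun i => s i m - c i m) t) i m,
      Matrix.mulVec_mulVec, Matrix.mul_nonsing_inv B hBdet, Matrix.one_mulVec]
    simp [hc]
end

section
/- (Joint privacy of the two sharing rounds against T colluders.) Let F be a field, K ≥ 1, T ≥ 1, M ≥ 1 integers, and let α_1, …, α_T ∈ F be pairwise distinct and nonzero. Fix sub-vectors w_1, …, w_K ∈ F^M. Then the map (F^M)^T × (F^M)^T → (F^M)^T × (F^M)^T sending the pair of mask tuples ((z_1,…,z_T), (r_1,…,r_T)) to the pair of share tuples ( (Σ_{k=1}^K w_k α_i^{k-1} + Σ_{t=1}^T z_t α_i^{K+t-1})_{i=1}^T , (Σ_{k=1}^K w_k α_i^{K-k} + Σ_{t=1}^T r_t α_i^{K+t-1})_{i=1}^T ) is a bijection. -/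
/-- joint privacy of the two sharing rounds against `T` colluders. For any
fixed secret sub-vectors `w₁,…,w_K ∈ F^M` and pairwise-distinct nonzero points `α₁,…,α_T`,
the map from the pair of mask tuples `((z₁,…,z_T),(r₁,…,r_T))` to the pair of share tuples
`((Σ_k w_k α_i^{k-1} + Σ_t z_t α_i^{K+t-1})_i, (Σ_k w_k α_i^{K-k} + Σ_t r_t α_i^{K+t-1})_i)`
is a bijection. -/
theorem stmt_8 {F : Type*} [Field F] (K T M : ℕ) (hK : 1 ≤ K) (hT : 1 ≤ T) (hM : 1 ≤ M)
    (α : Fin T → F) (hα : Function.Injective α) (hα0 : ∀ i, α i ≠ 0)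
    (w : Fin K → Fin M → F) :
    Function.Bijective (fun zr : (Fin T → Fin M → F) × (Fin T → Fin M → F) =>
      ((fun (i : Fin T) (m : Fin M) =>
          (∑ k : Fin K, w k m * α i ^ (k : ℕ)) +
            (∑ t : Fin T, zr.1 t m * α i ^ (K + (t : ℕ)))),
       (fun (i : Fin T) (m : Fin M) =>
          (∑ k : Fin K, w k m * α i ^ (K - 1 - (k : ℕ))) +
            (∑ t : Fin T, zr.2 t m * α i ^ (K + (t : ℕ)))))) := by
  classical
  set A : Matrix (Fin T) (Fin T) F := Matrix.of (fun i t => α i ^ (K + (t : ℕ))) with hAdef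
  have hAeq : A = Matrix.diagonal (fun i => α i ^ K) * Matrix.vandermonde α := by
    ext i j
    simp [hAdef, Matrix.diagonal_mul, Matrix.vandermonde, pow_add]
  have hdet : IsUnit A.det := by
    rw [hAeq, Matrix.det_mul, Matrix.det_diagonal, Matrix.det_vandermonde]
    refine isUnit_iff_ne_zero.mpr (mul_ne_zero ?_ ?_)
    · exact Finset.prod_ne_zero_iff.mpr fun i _ => pow_ne_zero _ (hα0 i)
    · refine Finset.prod_ne_zero_iff.mpr fun i _ => ?_
      refine Finset.prod_ne_zero_iff.mpr fun j hj => ?_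
      have hij : i ≠ j := by
        intro h; subst h; simp [Finset.mem_Ioi] at hj
      exact sub_ne_zero.mpr fun h => hij (hα h.symm)
  set B : Matrix (Fin T) (Fin T) F := A⁻¹ with hBdef
  have h1 : B * A = 1 := Matrix.nonsing_inv_mul A hdet
  have h2 : A * B = 1 := Matrix.mul_nonsing_inv A hdet
  -- key computations
  have key1 : ∀ (u : Fin T → F) (t : Fin T),
      (∑ j, B t j * (∑ t' : Fin T, u t' * A j t')) = u t := by
    intro u t
    have : (∑ j, B t j * (∑ t' : Fin T, u t' * A j t'))
        = ∑ t' : Fin T, (B * A) t t' * u t' := by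
      simp_rw [Finset.mul_sum, Matrix.mul_apply, Finset.sum_mul]
      rw [Finset.sum_comm]
      refine Finset.sum_congr rfl fun t' _ => Finset.sum_congr rfl fun j _ => by ring
    rw [this, h1]
    simp [Matrix.one_apply]
  have key2 : ∀ (u : Fin T → F) (i : Fin T),
      (∑ t' : Fin T, (∑ j, B t' j * u j) * A i t') = u i := by
    intro u i
    have : (∑ t' : Fin T, (∑ j, B t' j * u j) * A i t')
        = ∑ j, (A * B) i j * u j := by
      simp_rw [Finset.sum_mul, Matrix.mul_apply, Finset.sum_mul]
      rw [Finset.sum_comm]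
      refine Finset.sum_congr rfl fun j _ => Finset.sum_congr rfl fun t' _ => by ring
    rw [this, h2]
    simp [Matrix.one_apply]
  rw [Function.bijective_iff_has_inverse]
  refine ⟨fun s =>
    ((fun t m => ∑ j, B t j * (s.1 j m - ∑ k : Fin K, w k m * α j ^ (k : ℕ))),
     (fun t m => ∑ j, B t j * (s.2 j m - ∑ k : Fin K, w k m * α j ^ (K - 1 - (k : ℕ))))),
    ?_, ?_⟩
  · rintro ⟨z, r⟩
    refine Prod.ext ?_ ?_ <;> funext t m <;> simp only
    · have := key1 (fun t' => z t' m) t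
      simpa [hAdef, add_sub_cancel_left] using this
    · have := key1 (fun t' => r t' m) t
      simpa [hAdef, add_sub_cancel_left] using this
  · rintro ⟨s₁, s₂⟩
    refine Prod.ext ?_ ?_ <;> funext i m <;> simp only
    · have := key2 (fun j => s₁ j m - ∑ k : Fin K, w k m * α j ^ (k : ℕ)) i
      simp only [hAdef, Matrix.of_apply] at this
      rw [this]
      ring
    · have := key2 (fun j => s₂ j m - ∑ k : Fin K, w k m * α j ^ (K - 1 - (k : ℕ))) i
      simp only [hAdef, Matrix.of_apply] at this
      rw [this]
      ring
end

section
/- (Perfect secrecy of the first-round shares.) Let F be a finite field, K ≥ 1, T ≥ 1, M ≥ 1 integers, and let α_1, …, α_T ∈ F be pairwise distinct and nonzero. For sub-vectors w = (w_1,…,w_K) ∈ (F^M)^K, let Θ_w : (F^M)^T → (F^M)^T be the map sending masks (z_1,…,z_T) to the shares ( Σ_{k=1}^K w_k α_i^{k-1} + Σ_{t=1}^T z_t α_i^{K+t-1} )_{i=1}^T. Then for every two secrets w, w' ∈ (F^M)^K and every observed share tuple s ∈ (F^M)^T, the number of mask tuples z with Θ_w(z) = s equals the number of mask tuples z with Θ_{w'}(z)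 = s (both equal 1). Consequently, when the masks are drawn uniformly at random, the distribution of the T shares observed by T colluding users is uniform and does not depend on the secret w. -/
open Matrix

lemma aux_unique {F : Type*} [Field F] (K T M : ℕ)
    (α : Fin T → F) (hα : Function.Injective α) (hα0 : ∀ i, α i ≠ 0)
    (c s : Fin T → Fin M → F) :
    {z : Fin T → Fin M → F | (fun (i : Fin T) (m : Fin M) =>
        c i m + (∑ t : Fin T, z t m * α i ^ (K + (t : ℕ)))) = s}.ncard = 1 := by
  set A : Matrix (Fin T) (Fin T) F :=
    Matrix.of (fun i t : Fin T => α i ^ (K + (t : ℕ))) with hA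
  have hAfac : A = (Matrix.diagonal fun i => α i ^ K) * Matrix.vandermonde α := by
    ext i t
    simp [hA, Matrix.mul_apply, Matrix.diagonal, Matrix.vandermonde, pow_add,
      Finset.sum_eq_single i, Matrix.of_apply]
  have hdet : IsUnit A.det := by
    rw [hAfac, Matrix.det_mul, Matrix.det_diagonal, Matrix.det_vandermonde]
    refine (IsUnit.mul ?_ ?_)
    · exact (Finset.prod_ne_zero_iff.mpr (fun i _ => pow_ne_zero _ (hα0 i))).isUnit
    · refine (Finset.prod_ne_zero_iff.mpr (fun i _ => ?_)).isUnit
      exact Finset.prod_ne_zero_iff.mpr fun j hj => by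
        have hj' := Finset.mem_Ioi.mp hj
        exact sub_ne_zero_of_ne (fun h => absurd (hα h) (ne_of_gt hj'))
  have hinv : A⁻¹ * A = 1 := Matrix.nonsing_inv_mul A hdet
  have hinv' : A * A⁻¹ = 1 := Matrix.mul_nonsing_inv A hdet
  set z₀ : Fin T → Fin M → F :=
    fun t m => (A⁻¹ *ᵥ fun i => s i m - c i m) t with hz₀
  have key : ∀ z : Fin T → Fin M → F,
      ((fun (i : Fin T) (m : Fin M) =>
        c i m + (∑ t : Fin T, z t m * α i ^ (K + (t : ℕ)))) = s) ↔ z = z₀ := by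
    intro z
    have hmv : ∀ m i, (A *ᵥ fun t => z t m) i = ∑ t : Fin T, z t m * α i ^ (K + (t : ℕ)) := by
      intro m i
      simp [Matrix.mulVec, dotProduct, hA, mul_comm]
    constructor
    · intro h
      funext t m
      have h1 : (A *ᵥ fun t => z t m) = fun i => s i m - c i m := by
        funext i
        rw [hmv m i]
        have := congrFun (congrFun h i) m
        linear_combination this
      have : (A⁻¹ *ᵥ (A *ᵥ fun t => z t m)) = (A⁻¹ *ᵥ fun i => s i m - c i m) := by
        rw [h1]
      rw [Matrix.mulVec_mulVec, hinv, Matrix.one_mulVec] at this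
      exact (congrFun this t).trans rfl
    · rintro rfl
      funext i m
      have : (A *ᵥ fun t => z₀ t m) = fun i => s i m - c i m := by
        simp only [hz₀, Matrix.mulVec_mulVec, hinv', Matrix.one_mulVec]
      have h2 := congrFun this i
      rw [hmv m i] at h2
      rw [h2]; ring
  have : {z : Fin T → Fin M → F | (fun (i : Fin T) (m : Fin M) =>
        c i m + (∑ t : Fin T, z t m * α i ^ (K + (t : ℕ)))) = s} = {z₀} := by
    ext z; simp [key z]
  rw [this, Set.ncard_singleton]

/-- perfect secrecy of the first-round shares. With
`Θ_w(z) i m = Σ_k w k m · α_i^{k-1} + Σ_t z t m · α_i^{K+t-1}`, for every two secrets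
`w, w'` and every observed share tuple `s`, the number of mask tuples mapped to `s` under
`Θ_w` equals the number mapped to `s` under `Θ_{w'}`, and both equal `1`. -/
theorem stmt_17 {F : Type*} [Field F] [Fintype F] (K T M : ℕ)
    (hK : 1 ≤ K) (hT : 1 ≤ T) (hM : 1 ≤ M)
    (α : Fin T → F) (hα : Function.Injective α) (hα0 : ∀ i, α i ≠ 0)
    (w w' : Fin K → Fin M → F) (s : Fin T → Fin M → F) :
    {z : Fin T → Fin M → F | (fun (i : Fin T) (m : Fin M) =>
        (∑ k : Fin K, w k m * α i ^ (k : ℕ)) +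
          (∑ t : Fin T, z t m * α i ^ (K + (t : ℕ)))) = s}.ncard
      = {z : Fin T → Fin M → F | (fun (i : Fin T) (m : Fin M) =>
        (∑ k : Fin K, w' k m * α i ^ (k : ℕ)) +
          (∑ t : Fin T, z t m * α i ^ (K + (t : ℕ)))) = s}.ncard ∧
    {z : Fin T → Fin M → F | (fun (i : Fin T) (m : Fin M) =>
        (∑ k : Fin K, w k m * α i ^ (k : ℕ)) +
          (∑ t : Fin T, z t m * α i ^ (K + (t : ℕ)))) = s}.ncard = 1 := by
  have h1 := aux_unique K T M α hα hα0 (fun i m => ∑ k : Fin K, w k m * α i ^ (k : ℕ)) s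
  have h2 := aux_unique K T M α hα hα0 (fun i m => ∑ k : Fin K, w' k m * α i ^ (k : ℕ)) s
  exact ⟨h1.trans h2.symm, h1⟩
end
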